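/- Let x̄ be feasible for the constraint system F(x) ∈ Ω, and assume that for every continuously differentiable function f : ℝ^n → ℝ for which x̄ is a local minimizer of min f(x) subject to F(x) ∈ Ω, the point x̄ is extended M-stationary. Then the generalized Guignard constraint qualification GGCQ holds at x̄, i.e. N̂(x̄;𝓕) = N̂(0; T_lin(x̄)). -/

import Mathlib

noncomputable section

open Filter Topology Set

/-- Euclidean space `ℝ^n`. -/
abbrev Euc (n : ℕ) : Type := EuclideanSpace ℝ (Fin n)

variable {E : Type*} [NormedAddCommGroup E] [NormedSpace ℝ E]
variable {Y : Type*} [NormedAddCommGroup Y] [NormedSpace ℝ Y]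

/-- The contingent (Bouligand/tangent) cone `T(x;Ω)`; empty when `x ∉ Ω`. -/
def tcone (Ω : Set E) (x : E) : Set E :=
  {u | x ∈ Ω ∧ ∃ t : ℕ → ℝ, ∃ w : ℕ → E, (∀ k, 0 < t k) ∧
    Tendsto t atTop (𝓝 0) ∧ Tendsto w atTop (𝓝 u) ∧ ∀ k, x + t k • w k ∈ Ω}

/-- The Fréchet (regular) normal cone `N̂(x;Ω)`, viewed as a set of continuous
linear functionals; empty when `x ∉ Ω`. -/
def fnc (Ω : Set E) (x : E) : Set (E →L[ℝ] ℝ) :=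
  {ξ | x ∈ Ω ∧ ∀ ε : ℝ, 0 < ε → ∃ δ : ℝ, 0 < δ ∧
    ∀ y ∈ Ω, ‖y - x‖ < δ → ξ (y - x) ≤ ε * ‖y - x‖}

/-- The limiting (Mordukhovich) normal cone `N(x;Ω)`; empty when `x ∉ Ω`. -/
def lnc (Ω : Set E) (x : E) : Set (E →L[ℝ] ℝ) :=
  {ξ | x ∈ Ω ∧ ∃ xk : ℕ → E, ∃ ξk : ℕ → (E →L[ℝ] ℝ),
    Tendsto xk atTop (𝓝 x) ∧ Tendsto ξk atTop (𝓝 ξ) ∧ ∀ k, ξk k ∈ fnc Ω (xk k)}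

/-- The directional limiting normal cone `N(x;Ω;u)`; empty when `x ∉ Ω`. -/
def dlnc (Ω : Set E) (x u : E) : Set (E →L[ℝ] ℝ) :=
  {ξ | x ∈ Ω ∧ ∃ t : ℕ → ℝ, ∃ w : ℕ → E, ∃ ξk : ℕ → (E →L[ℝ] ℝ), (∀ k, 0 < t k) ∧
    Tendsto t atTop (𝓝 0) ∧ Tendsto w atTop (𝓝 u) ∧ Tendsto ξk atTop (𝓝 ξ) ∧
    ∀ k, ξk k ∈ fnc Ω (x + t k • w k)}

/-- A convex polyhedron: a finite intersection of closed halfspaces. -/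
def IsPolyhedron (P : Set E) : Prop :=
  ∃ k : ℕ, ∃ a : Fin k → (E →L[ℝ] ℝ), ∃ b : Fin k → ℝ, P = {x | ∀ j, a j x ≤ b j}

/-- A union of finitely many convex polyhedra. -/
def IsFinUnionPolyhedra (Ω : Set E) : Prop :=
  ∃ p : ℕ, ∃ P : Fin p → Set E, (∀ i, IsPolyhedron (P i)) ∧ Ω = ⋃ i, P i

/-- The constraint multifunction `M(x) = F(x) - Ω`. -/
def cmap (F : E → Y) (Ω : Set Y) : E → Set Y := fun x => {y | F x - y ∈ Ω}

/-- Metric subregularity of `M` at `(x̄,ȳ) ∈ gph M`. -/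
def SubregAt (M : E → Set Y) (x' : E) (y' : Y) : Prop :=
  y' ∈ M x' ∧ ∃ κ : ℝ, 0 < κ ∧ ∃ ε : ℝ, 0 < ε ∧ ∀ x : E, dist x x' < ε →
    EMetric.infEdist x {z | y' ∈ M z} ≤ ENNReal.ofReal κ * EMetric.infEdist y' (M x)

/-- The directional neighborhood `V_{ρ,δ}(u)`. -/
def dirNbhd (u : E) (ρ δ : ℝ) : Set E :=
  {z | ‖z‖ ≤ ρ ∧ ‖‖u‖ • z - ‖z‖ • u‖ ≤ δ * (‖z‖ * ‖u‖)}

/-- Metric subregularity of `M` in direction `u` at `(x̄,ȳ) ∈ gph M`. -/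
def SubregDir (M : E → Set Y) (x' : E) (y' : Y) (u : E) : Prop :=
  y' ∈ M x' ∧ ∃ ρ : ℝ, 0 < ρ ∧ ∃ δ : ℝ, 0 < δ ∧ ∃ κ : ℝ, 0 < κ ∧
    ∀ z ∈ dirNbhd u ρ δ,
      EMetric.infEdist (x' + z) {z' | y' ∈ M z'} ≤
        ENNReal.ofReal κ * EMetric.infEdist y' (M (x' + z))

/-- Mixed metric regularity/subregularity of `M = (M₁,M₂)` at `(x̄,(ȳ₁,ȳ₂))`. -/
def MixedRegSubreg {Y₁ Y₂ : Type*} [NormedAddCommGroup Y₁] [NormedSpace ℝ Y₁]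
    [NormedAddCommGroup Y₂] [NormedSpace ℝ Y₂]
    (M₁ : E → Set Y₁) (M₂ : E → Set Y₂) (x' : E) (y₁' : Y₁) (y₂' : Y₂) : Prop :=
  y₁' ∈ M₁ x' ∧ y₂' ∈ M₂ x' ∧ ∃ κ : ℝ, 0 < κ ∧ ∃ ε : ℝ, 0 < ε ∧
    ∀ x : E, ∀ y₁ : Y₁, dist x x' < ε → dist y₁ y₁' < ε →
      EMetric.infEdist x {z | y₁ ∈ M₁ z ∧ y₂' ∈ M₂ z} ≤
        ENNReal.ofReal κ * EMetric.infEdist (y₁, y₂') (M₁ x ×ˢ M₂ x)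

/-!
The inclusion `N̂(0; T_lin(x̄)) ⊆ N̂(x̄; 𝓕)` is general: `T(x̄; 𝓕) ⊆ T_lin(x̄)`, and in finite
dimensions the polar of `T(x̄; 𝓕)` lies in `N̂(x̄; 𝓕)` by compactness of the unit sphere.

Conversely, a Fréchet normal `ξ` of `𝓕` at `x̄` is `-∇f(x̄)` for a C¹ function `f` minimized over
`𝓕` at `x̄` (Rockafellar–Wets 6.11): `f z = θ ‖z - x̄‖ - ξ (z - x̄)`, with `θ` a C¹ majorant, flat
at `0`, of the modulus `t ↦ sup {ξ (y - x̄) | y ∈ 𝓕, ‖y - x̄‖ ≤ t} = o(t)`. If `ξ u > 0` for some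
`u ∈ T_lin(x̄)`, extended M-stationarity for this `f` yields `μ ∈ N(F x̄; Ω; ∇F(x̄) u)` with
`ξ = μ ∘ ∇F(x̄)`. But for a finite union of polyhedra every directional normal `μ ∈ N(z; Ω; v)`
has `μ v ≤ 0`: along the defining sequence one polyhedron is visited infinitely often, near `z` it
agrees with its tangent cone, so `v` is a feasible direction at the points carrying the
approximating Fréchet normals.
-/

lemma le_zero_of_forall_pos_le_mul {c C : ℝ} (h : ∀ ε > 0, c ≤ ε * C) : c ≤ 0 := by
  have hlim : Tendsto (fun ε : ℝ => ε * C) (𝓝[>] 0) (𝓝 0) :=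
    ((continuous_mul_const C).tendsto' 0 0 (zero_mul C)).mono_left nhdsWithin_le_nhds
  exact ge_of_tendsto hlim (eventually_nhdsWithin_of_forall h)

lemma apply_nonpos_of_mem_fnc {Ω : Set E} {y v : E} {ξ : E →L[ℝ] ℝ} (hξ : ξ ∈ fnc Ω y)
    (hv : ∀ᶠ s in 𝓝[>] (0 : ℝ), y + s • v ∈ Ω) : ξ v ≤ 0 := by
  refine le_zero_of_forall_pos_le_mul (C := ‖v‖) fun ε hε => ?_
  obtain ⟨δ, hδ, hδξ⟩ := hξ.2 ε hε
  have hsmall : ∀ᶠ s in 𝓝[>] (0 : ℝ), ‖s • v‖ < δ := by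
    have h : Tendsto (fun s : ℝ => ‖s • v‖) (𝓝 0) (𝓝 0) :=
      (by fun_prop : Continuous fun s : ℝ => ‖s • v‖).tendsto' 0 0 (by simp)
    exact (h.eventually (gt_mem_nhds hδ)).filter_mono nhdsWithin_le_nhds
  obtain ⟨s, ⟨hsΩ, hsδ⟩, hs⟩ := ((hv.and hsmall).and self_mem_nhdsWithin).exists
  have h := hδξ _ hsΩ (by simpa using hsδ)
  rw [add_sub_cancel_left, map_smul, norm_smul, Real.norm_of_nonneg (le_of_lt hs),
    smul_eq_mul, mul_left_comm] at h
  exact le_of_mul_le_mul_left h hs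

lemma mem_fnc_zero_of_forall_nonpos {C : Set E} {ξ : E →L[ℝ] ℝ} (h0 : (0 : E) ∈ C)
    (h : ∀ u ∈ C, ξ u ≤ 0) : ξ ∈ fnc C 0 := by
  refine ⟨h0, fun ε hε => ⟨1, one_pos, fun y hy _ => ?_⟩⟩
  rw [sub_zero]
  exact (h y hy).trans (by positivity)

lemma apply_nonpos_of_mem_fnc_zero {C : Set E} {ξ : E →L[ℝ] ℝ}
    (hC : ∀ u ∈ C, ∀ s : ℝ, 0 < s → s • u ∈ C) (hξ : ξ ∈ fnc C 0) {u : E} (hu : u ∈ C) :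
    ξ u ≤ 0 :=
  apply_nonpos_of_mem_fnc hξ (eventually_nhdsWithin_of_forall fun s hs => by
    simpa using hC u hu s hs)

lemma zero_mem_tcone {Ω : Set E} {x : E} (hx : x ∈ Ω) : (0 : E) ∈ tcone Ω x :=
  ⟨hx, fun k => 1 / (k + 1 : ℝ), fun _ => 0, fun k => by positivity,
    tendsto_one_div_add_atTop_nhds_zero_nat, tendsto_const_nhds, fun k => by simpa using hx⟩

lemma smul_mem_tcone {Ω : Set E} {x v : E} (hv : v ∈ tcone Ω x) {s : ℝ} (hs : 0 < s) :
    s • v ∈ tcone Ω x := by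
  obtain ⟨hx, t, w, ht, ht0, hw, hmem⟩ := hv
  refine ⟨hx, fun k => t k / s, fun k => s • w k, fun k => div_pos (ht k) hs,
    by simpa using ht0.div_const s, hw.const_smul s, fun k => ?_⟩
  rw [smul_smul, div_mul_cancel₀ _ hs.ne']
  exact hmem k

lemma HasFDerivAt.mem_tcone_of_mem_tcone_preimage {F : E → Y} {A : E →L[ℝ] Y} {Ω : Set Y}
    {x u : E} (hF : HasFDerivAt F A x) (hu : u ∈ tcone {z | F z ∈ Ω} x) :
    A u ∈ tcone Ω (F x) := by
  obtain ⟨hx, t, w, ht, ht0, hw, hmem⟩ := hu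
  refine ⟨hx, t, fun k => (t k)⁻¹ • (F (x + t k • w k) - F x), ht, ht0, ?_, fun k => ?_⟩
  · refine hF.hasFDerivWithinAt.lim (s := univ) ?_ (Eventually.of_forall fun _ => trivial) ?_
    · simpa using ht0.smul hw
    · simpa [smul_smul, inv_mul_cancel₀ (ht _).ne'] using hw
  · simpa [smul_smul, mul_inv_cancel₀ (ht k).ne'] using hmem k

lemma exists_mem_tcone_of_tendsto [ProperSpace E] {S : Set E} {x : E} (hx : x ∈ S)
    {y : ℕ → E} (hyS : ∀ k, y k ∈ S) (hyx : ∀ k, y k ≠ x) (hy : Tendsto y atTop (𝓝 x)) :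
    ∃ v ∈ tcone S x, ∃ φ : ℕ → ℕ, StrictMono φ ∧
      Tendsto (fun k => ‖y (φ k) - x‖⁻¹ • (y (φ k) - x)) atTop (𝓝 v) := by
  have hpos : ∀ k, 0 < ‖y k - x‖ := fun k => norm_pos_iff.2 (sub_ne_zero.2 (hyx k))
  have hsphere : ∀ k, ‖y k - x‖⁻¹ • (y k - x) ∈ Metric.sphere (0 : E) 1 := fun k => by
    simp [norm_smul, inv_mul_cancel₀ (hpos k).ne']
  obtain ⟨v, -, φ, hφ, hv⟩ := (isCompact_sphere (0 : E) 1).tendsto_subseq hsphere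
  refine ⟨v, ⟨hx, fun k => ‖y (φ k) - x‖, _, fun k => hpos (φ k), ?_, hv, fun k => ?_⟩, φ, hφ, hv⟩
  · exact (tendsto_iff_norm_sub_tendsto_zero.1 hy).comp hφ.tendsto_atTop
  · simpa [smul_smul, mul_inv_cancel₀ (hpos (φ k)).ne'] using hyS (φ k)

lemma mem_fnc_of_forall_mem_tcone_nonpos [ProperSpace E] {S : Set E} {x : E} {ξ : E →L[ℝ] ℝ}
    (hx : x ∈ S) (hξ : ∀ u ∈ tcone S x, ξ u ≤ 0) : ξ ∈ fnc S x := by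
  refine ⟨hx, fun ε hε => ?_⟩
  by_contra! h
  choose y hyS hyx hξy using fun k : ℕ => h (1 / (k + 1)) (by positivity)
  have hne : ∀ k, y k ≠ x := fun k hk => by simpa [hk] using hξy k
  have hy : Tendsto y atTop (𝓝 x) := tendsto_iff_norm_sub_tendsto_zero.2 <|
    squeeze_zero (fun _ => norm_nonneg _) (fun k => (hyx k).le)
      tendsto_one_div_add_atTop_nhds_zero_nat
  obtain ⟨v, hv, φ, -, hφv⟩ := exists_mem_tcone_of_tendsto hx hyS hne hy
  have hεv : ε ≤ ξ v := ge_of_tendsto' (ξ.continuous.tendsto v |>.comp hφv) fun k => by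
    have hpos : 0 < ‖y (φ k) - x‖ := norm_pos_iff.2 (sub_ne_zero.2 (hne (φ k)))
    simp only [Function.comp_apply, map_smul, smul_eq_mul]
    rw [le_inv_mul_iff₀ hpos]
    linarith [hξy (φ k)]
  linarith [hξ v hv]

lemma fnc_zero_subset_fnc_preimage [ProperSpace E] {F : E → Y} {A : E →L[ℝ] Y} {Ω : Set Y}
    {x : E} (hF : HasFDerivAt F A x) (hx : F x ∈ Ω) :
    fnc {u | A u ∈ tcone Ω (F x)} 0 ⊆ fnc {z | F z ∈ Ω} x := fun ξ hξ =>
  mem_fnc_of_forall_mem_tcone_nonpos hx fun u hu =>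
    apply_nonpos_of_mem_fnc_zero (fun v hv s hs => by
      show A (s • v) ∈ tcone Ω (F x)
      exact (map_smul A s v).symm ▸ smul_mem_tcone hv hs) hξ
      (hF.mem_tcone_of_mem_tcone_preimage hu)

lemma IsPolyhedron.isClosed {P : Set E} (hP : IsPolyhedron P) : IsClosed P := by
  obtain ⟨k, a, b, rfl⟩ := hP
  rw [ofPred_forall]
  exact isClosed_iInter fun j => isClosed_le (a j).continuous continuous_const

lemma eventually_polyhedron_mem_iff {k : ℕ} (a : Fin k → E →L[ℝ] ℝ) (b : Fin k → ℝ) {x : E}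
    (hx : ∀ j, a j x ≤ b j) :
    ∀ᶠ y in 𝓝 x, (∀ j, a j y ≤ b j) ↔ ∀ j, a j x = b j → a j (y - x) ≤ 0 := by
  have hinactive : ∀ᶠ y in 𝓝 x, ∀ j, a j x < b j → a j y < b j :=
    eventually_all.2 fun j => by
      by_cases hj : a j x < b j
      · exact ((a j).continuous.tendsto x |>.eventually_lt_const hj).mono fun _ h _ => h
      · exact Eventually.of_forall fun _ h => absurd h hj
  filter_upwards [hinactive] with y hy
  refine ⟨fun h j hj => by rw [map_sub]; linarith [h j], fun h j => ?_⟩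
  rcases (hx j).lt_or_eq with hj | hj
  · exact (hy j hj).le
  · have := h j hj
    rw [map_sub] at this
    linarith

lemma apply_nonpos_of_tendsto_polyhedron {Ω P : Set E} (hP : IsPolyhedron P) (hPΩ : P ⊆ Ω)
    {x v : E} {μ : E →L[ℝ] ℝ} {t : ℕ → ℝ} {w : ℕ → E} {μk : ℕ → E →L[ℝ] ℝ}
    (ht : ∀ k, 0 < t k) (ht0 : Tendsto t atTop (𝓝 0)) (hw : Tendsto w atTop (𝓝 v))
    (hμ : Tendsto μk atTop (𝓝 μ)) (hmem : ∀ k, x + t k • w k ∈ P)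
    (hμk : ∀ k, μk k ∈ fnc Ω (x + t k • w k)) : μ v ≤ 0 := by
  have hy : Tendsto (fun k => x + t k • w k) atTop (𝓝 x) := by
    simpa using tendsto_const_nhds.add (ht0.smul hw)
  have hx : x ∈ P := hP.isClosed.mem_of_tendsto hy (Eventually.of_forall hmem)
  obtain ⟨m, a, b, rfl⟩ := hP
  have hactive : ∀ j, a j x = b j → a j v ≤ 0 := by
    refine fun j hj => le_of_tendsto ((a j).continuous.tendsto v |>.comp hw)
      (Eventually.of_forall fun k => ?_)
    have := hmem k j
    rw [map_add, map_smul, smul_eq_mul, hj] at this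
    show a j (w k) ≤ 0
    exact nonpos_of_mul_nonpos_right (by linarith) (ht k)
  have hfeas : ∀ᶠ k in atTop, ∀ᶠ s in 𝓝[>] (0 : ℝ), x + t k • w k + s • v ∈ Ω := by
    filter_upwards [hy.eventually (eventually_polyhedron_mem_iff a b hx).eventually_nhds]
      with k hk
    have hline : Tendsto (fun s : ℝ => x + t k • w k + s • v) (𝓝 0) (𝓝 (x + t k • w k)) :=
      (by fun_prop : Continuous fun s : ℝ => x + t k • w k + s • v).tendsto' 0 _ (by simp)
    filter_upwards [(hline.mono_left nhdsWithin_le_nhds).eventually hk, self_mem_nhdsWithin]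
      with s hs hs₀
    refine hPΩ (hs.2 fun j hj => ?_)
    have hyk := hk.self_of_nhds.1 (hmem k) j hj
    rw [add_sub_right_comm, map_add, map_smul, smul_eq_mul]
    nlinarith [hactive j hj, mem_Ioi.1 hs₀]
  exact le_of_tendsto ((ContinuousLinearMap.apply ℝ ℝ v).continuous.tendsto μ |>.comp hμ)
    (hfeas.mono fun k hk => apply_nonpos_of_mem_fnc (v := v) (hμk k) hk)

lemma exists_strictMono_forall_mem_of_mem_iUnion {α ι : Type*} [Finite ι] {P : ι → Set α}
    {y : ℕ → α} (hy : ∀ k, y k ∈ ⋃ i, P i) :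
    ∃ i, ∃ φ : ℕ → ℕ, StrictMono φ ∧ ∀ k, y (φ k) ∈ P i := by
  suffices ∃ i, ∃ᶠ k in atTop, y k ∈ P i by
    obtain ⟨i, hi⟩ := this
    exact ⟨i, extraction_of_frequently_atTop hi⟩
  by_contra! h
  obtain ⟨k, hk⟩ := (eventually_all.2 h).exists
  obtain ⟨i, hi⟩ := mem_iUnion.1 (hy k)
  exact hk i hi

lemma apply_nonpos_of_mem_dlnc {Ω : Set E} (hΩ : IsFinUnionPolyhedra Ω) {x v : E}
    {μ : E →L[ℝ] ℝ} (hμ : μ ∈ dlnc Ω x v) : μ v ≤ 0 := by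
  obtain ⟨-, t, w, μk, ht, ht0, hw, hμ, hμk⟩ := hμ
  obtain ⟨p, P, hP, rfl⟩ := hΩ
  obtain ⟨i, φ, hφ, hφP⟩ := exists_strictMono_forall_mem_of_mem_iUnion fun k => (hμk k).1
  have hφ' := hφ.tendsto_atTop
  exact apply_nonpos_of_tendsto_polyhedron (hP i) (subset_iUnion P i) (fun k => ht (φ k))
    (ht0.comp hφ') (hw.comp hφ') (hμ.comp hφ') hφP fun k => hμk (φ k)

section SmoothVariational

open intervalIntegral MeasureTheory

lemma Monotone.mul_le_intervalIntegral {f : ℝ → ℝ} (hf : Monotone f) {a b : ℝ} (hab : a ≤ b) :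
    (b - a) * f a ≤ ∫ x in a..b, f x := by
  simpa using integral_mono_on hab intervalIntegrable_const (hf.intervalIntegrable (μ := volume))
    fun x hx => hf hx.1

lemma Monotone.intervalIntegral_le_mul {f : ℝ → ℝ} (hf : Monotone f) {a b : ℝ} (hab : a ≤ b) :
    ∫ x in a..b, f x ≤ (b - a) * f b := by
  simpa using integral_mono_on hab (hf.intervalIntegrable (μ := volume)) intervalIntegrable_const
    fun x hx => hf hx.2

/-- A continuous stand-in for the slopes `2 ρ(2s) / s ≤ · ≤ 2 ρ(4s) / s` of a monotone `ρ`. -/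
def smoothedSlope (ρ : ℝ → ℝ) (s : ℝ) : ℝ := (∫ u in (2 * s)..(4 * s), ρ u) / s ^ 2

lemma smoothedSlope_bounds {ρ : ℝ → ℝ} (hmono : Monotone ρ) {s : ℝ} (hs : 0 < s) :
    2 * ρ (2 * s) / s ≤ smoothedSlope ρ s ∧ smoothedSlope ρ s ≤ 2 * ρ (4 * s) / s := by
  have h₁ := hmono.mul_le_intervalIntegral (by linarith : 2 * s ≤ 4 * s)
  have h₂ := hmono.intervalIntegral_le_mul (by linarith : 2 * s ≤ 4 * s)
  constructor
  · rw [smoothedSlope, div_le_div_iff₀ hs (by positivity)]; nlinarith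
  · rw [smoothedSlope, div_le_div_iff₀ (by positivity) hs]; nlinarith

lemma smoothedSlope_of_nonpos {ρ : ℝ → ℝ} (hρ : ∀ t ≤ 0, ρ t = 0) {s : ℝ} (hs : s ≤ 0) :
    smoothedSlope ρ s = 0 := by
  have : ∫ u in (2 * s)..(4 * s), ρ u = ∫ u in (2 * s)..(4 * s), (0 : ℝ) :=
    integral_congr fun u hu => hρ u <| by
      rw [uIcc_of_ge (by linarith)] at hu; linarith [hu.2]
  simp [smoothedSlope, this]

lemma continuous_smoothedSlope {ρ : ℝ → ℝ} (hmono : Monotone ρ) (hρ : ∀ t ≤ 0, ρ t = 0)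
    (hsmall : ∀ ε > 0, ∃ δ > 0, ∀ t, 0 ≤ t → t < δ → ρ t ≤ ε * t) :
    Continuous (smoothedSlope ρ) := by
  have hI : Continuous fun s : ℝ => ∫ u in (2 * s)..(4 * s), ρ u := by
    have hH := continuous_primitive (fun _ _ => hmono.intervalIntegrable (μ := volume)) 0
    have : (fun s : ℝ => ∫ u in (2 * s)..(4 * s), ρ u) =
        fun s => (∫ u in (0 : ℝ)..(4 * s), ρ u) - ∫ u in (0 : ℝ)..(2 * s), ρ u := by
      funext s
      exact (integral_interval_sub_left hmono.intervalIntegrable hmono.intervalIntegrable).symm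
    rw [this]
    fun_prop
  refine continuous_iff_continuousAt.2 fun s => ?_
  rcases ne_or_eq s 0 with hs | rfl
  · exact hI.continuousAt.div (continuous_pow 2).continuousAt (pow_ne_zero 2 hs)
  rw [ContinuousAt, smoothedSlope_of_nonpos hρ le_rfl, Metric.tendsto_nhds_nhds]
  intro ε hε
  obtain ⟨δ, hδ, hδρ⟩ := hsmall (ε / 16) (by positivity)
  refine ⟨δ / 4, by positivity, fun s hs => ?_⟩
  simp only [Real.dist_eq, sub_zero] at hs ⊢
  rcases le_or_gt s 0 with hs₀ | hs₀
  · rwa [smoothedSlope_of_nonpos hρ hs₀, abs_zero]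
  rw [abs_of_pos hs₀] at hs
  have hbounds := smoothedSlope_bounds hmono hs₀
  have hnonneg : 0 ≤ ρ (2 * s) := hρ 0 le_rfl ▸ hmono (by linarith)
  rw [abs_of_nonneg ((div_nonneg (by linarith) hs₀.le).trans hbounds.1)]
  calc smoothedSlope ρ s ≤ 2 * ρ (4 * s) / s := hbounds.2
    _ ≤ 2 * (ε / 16 * (4 * s)) / s := by gcongr; exact hδρ _ (by positivity) (by linarith)
    _ = ε / 2 := by field_simp; ring
    _ < ε := by linarith

/-- `θ t = ∫₀ᵗ smoothedSlope ρ`: the lower bound `2 ρ(2s) / s` of the integrand gives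
`∫_{t/2}^t ≥ ρ t`, and the upper bound `2 ρ(4s) / s → 0` makes `θ' 0 = 0`. -/
lemma exists_contDiff_majorant {ρ : ℝ → ℝ} (hmono : Monotone ρ) (hnonneg : ∀ t, 0 ≤ ρ t)
    (hsmall : ∀ ε > 0, ∃ δ > 0, ∀ t, 0 ≤ t → t < δ → ρ t ≤ ε * t) :
    ∃ θ : ℝ → ℝ, ContDiff ℝ 1 θ ∧ θ 0 = 0 ∧ deriv θ 0 = 0 ∧ ∀ t, 0 < t → ρ t ≤ θ t := by
  have hρ : ∀ t ≤ 0, ρ t = 0 := by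
    obtain ⟨δ, hδ, hδρ⟩ := hsmall 1 one_pos
    exact fun t ht => le_antisymm
      ((hmono ht).trans (by simpa using hδρ 0 le_rfl hδ)) (hnonneg t)
  have hg := continuous_smoothedSlope hmono hρ hsmall
  have hg_nonneg : ∀ s, 0 ≤ smoothedSlope ρ s := fun s => by
    rcases le_or_gt s 0 with hs | hs
    · rw [smoothedSlope_of_nonpos hρ hs]
    · exact (div_nonneg (by linarith [hnonneg (2 * s)]) hs.le).trans
        (smoothedSlope_bounds hmono hs).1
  refine ⟨fun t => ∫ u in (0 : ℝ)..t, smoothedSlope ρ u, ?_, integral_same, ?_, fun t ht => ?_⟩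
  · rw [contDiff_one_iff_deriv]
    refine ⟨fun t => (hg.integral_hasStrictDerivAt 0 t).hasDerivAt.differentiableAt, ?_⟩
    rwa [funext (hg.deriv_integral (a := 0))]
  · rw [hg.deriv_integral, smoothedSlope_of_nonpos hρ le_rfl]
  calc ρ t = ∫ _ in (t / 2)..t, 2 * ρ t / t := by
        rw [intervalIntegral.integral_const, smul_eq_mul]; field_simp; ring
    _ ≤ ∫ u in (t / 2)..t, smoothedSlope ρ u := by
      refine integral_mono_on (by linarith) intervalIntegrable_const
        (hg.intervalIntegrable _ _) fun s hs => ?_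
      have hs₀ : 0 < s := by linarith [hs.1]
      calc 2 * ρ t / t ≤ 2 * ρ (2 * s) / t := by gcongr; exact hmono (by linarith [hs.1])
        _ ≤ 2 * ρ (2 * s) / s := by gcongr; exacts [by linarith [hnonneg (2 * s)], hs.2]
        _ ≤ smoothedSlope ρ s := (smoothedSlope_bounds hmono hs₀).1
    _ ≤ ∫ u in (0 : ℝ)..t, smoothedSlope ρ u :=
      integral_mono_interval (by linarith) (by linarith) le_rfl
        (Eventually.of_forall hg_nonneg) (hg.intervalIntegrable _ _)

lemma exists_modulus_of_mem_fnc {S : Set E} {x : E} {ξ : E →L[ℝ] ℝ} (hξ : ξ ∈ fnc S x) :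
    ∃ ρ : ℝ → ℝ, Monotone ρ ∧ (∀ t, 0 ≤ ρ t) ∧
      (∀ ε > 0, ∃ δ > 0, ∀ t, 0 ≤ t → t < δ → ρ t ≤ ε * t) ∧
      ∀ y ∈ S, ξ (y - x) ≤ ρ ‖y - x‖ := by
  set V : ℝ → Set ℝ := fun t => insert 0 ((fun y => ξ (y - x)) '' {y | y ∈ S ∧ ‖y - x‖ ≤ t})
  have hV_bdd : ∀ t, BddAbove (V t) := by
    refine fun t => ⟨‖ξ‖ * |t|, ?_⟩
    rintro _ (rfl | ⟨y, ⟨-, hy⟩, rfl⟩)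
    · positivity
    · calc ξ (y - x) ≤ ‖ξ‖ * ‖y - x‖ := (le_abs_self _).trans (ξ.le_opNorm _)
        _ ≤ ‖ξ‖ * |t| := by gcongr; exact hy.trans (le_abs_self t)
  refine ⟨fun t => sSup (V t), fun s t hst => ?_, fun t => le_csSup (hV_bdd t) (mem_insert _ _),
    fun ε hε => ?_, fun y hy => le_csSup (hV_bdd _) (mem_insert_of_mem _ ⟨y, ⟨hy, le_rfl⟩, rfl⟩)⟩
  · exact csSup_le_csSup (hV_bdd t) (insert_nonempty _ _)
      (insert_subset_insert (image_mono fun y hy => ⟨hy.1, hy.2.trans hst⟩))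
  obtain ⟨δ, hδ, hδξ⟩ := hξ.2 ε hε
  refine ⟨δ, hδ, fun t ht htδ => csSup_le (insert_nonempty _ _) ?_⟩
  rintro _ (rfl | ⟨y, ⟨hyS, hy⟩, rfl⟩)
  · positivity
  · calc ξ (y - x) ≤ ε * ‖y - x‖ := hδξ y hyS (hy.trans_lt htδ)
      _ ≤ ε * t := by gcongr

lemma hasFDerivAt_comp_norm_sub {θ : ℝ → ℝ} (hθ : HasDerivAt θ 0 0) (x : E) :
    HasFDerivAt (fun z : E => θ ‖z - x‖) (0 : E →L[ℝ] ℝ) x := by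
  rw [hasFDerivAt_iff_isLittleO_nhds_zero]
  have h := (hasDerivAt_iff_isLittleO_nhds_zero.mp hθ).comp_tendsto
    (continuous_norm.tendsto' (0 : E) 0 norm_zero)
  refine Asymptotics.isLittleO_norm_right.mp ?_
  simpa [Function.comp_def] using h

variable {H : Type*} [NormedAddCommGroup H] [InnerProductSpace ℝ H]

lemma contDiff_one_comp_norm {θ : ℝ → ℝ} (hθ : ContDiff ℝ 1 θ) (hθ0 : deriv θ 0 = 0) :
    ContDiff ℝ 1 (fun z : H => θ ‖z‖) := by
  have hθd : ∀ t, HasDerivAt θ (deriv θ t) t := fun t =>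
    (hθ.differentiable one_ne_zero t).hasDerivAt
  have hne : ∀ z : H, z ≠ 0 → ContDiffAt ℝ 1 (fun z : H => θ ‖z‖) z := fun z hz =>
    hθ.contDiffAt.comp z (contDiffAt_norm ℝ hz)
  have h0 : HasFDerivAt (fun z : H => θ ‖z‖) (0 : H →L[ℝ] ℝ) 0 :=
    by simpa using hasFDerivAt_comp_norm_sub (by have h := hθd 0; rwa [hθ0] at h) (0 : H)
  have hbound : ∀ z : H, z ≠ 0 → ‖fderiv ℝ (fun z : H => θ ‖z‖) z‖ ≤ |deriv θ ‖z‖| := by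
    intro z hz
    have hn : HasFDerivAt (‖·‖) (fderiv ℝ (‖·‖) z) z :=
      ((contDiffAt_norm ℝ hz).differentiableAt one_ne_zero).hasFDerivAt
    rw [HasFDerivAt.fderiv (f := fun z : H => θ ‖z‖) ((hθd _).comp_hasFDerivAt z hn),
      norm_smul, Real.norm_eq_abs]
    exact mul_le_of_le_one_right (abs_nonneg _)
      (by simpa using norm_fderiv_le_of_lipschitz ℝ (lipschitzWith_one_norm (E := H)) (x₀ := z))
  rw [contDiff_one_iff_fderiv]
  refine ⟨fun z => ?_, continuous_iff_continuousAt.2 fun z => ?_⟩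
  · rcases eq_or_ne z 0 with rfl | hz
    · exact h0.differentiableAt
    · exact (hne z hz).differentiableAt one_ne_zero
  rcases eq_or_ne z 0 with rfl | hz
  · rw [ContinuousAt, h0.fderiv, tendsto_zero_iff_norm_tendsto_zero]
    have hlim : Tendsto (fun z : H => |deriv θ ‖z‖|) (𝓝 0) (𝓝 0) := by
      simpa [hθ0] using ((hθ.continuous_deriv le_rfl).comp continuous_norm).abs.tendsto (0 : H)
    refine squeeze_zero_norm' ?_ hlim
    filter_upwards with w
    rcases eq_or_ne w 0 with rfl | hw
    · simp [h0.fderiv]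
    · simpa using hbound w hw
  · exact (hne z hz).continuousAt_fderiv one_ne_zero

lemma exists_contDiff_isMinOn_of_mem_fnc {S : Set H} {x : H} {ξ : H →L[ℝ] ℝ}
    (hξ : ξ ∈ fnc S x) :
    ∃ f : H → ℝ, ContDiff ℝ 1 f ∧ IsMinOn f S x ∧ fderiv ℝ f x = -ξ := by
  obtain ⟨ρ, hmono, hnonneg, hsmall, hξρ⟩ := exists_modulus_of_mem_fnc hξ
  obtain ⟨θ, hθ, hθ0, hθ'0, hρθ⟩ := exists_contDiff_majorant hmono hnonneg hsmall
  have hshift : HasFDerivAt (fun z : H => z - x) (ContinuousLinearMap.id ℝ H) x :=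
    (hasFDerivAt_id x).sub_const x
  have hθx : HasFDerivAt (fun z : H => θ ‖z - x‖) (0 : H →L[ℝ] ℝ) x := by
    have hθd := (hθ.differentiable one_ne_zero 0).hasDerivAt
    rw [hθ'0] at hθd
    exact hasFDerivAt_comp_norm_sub hθd x
  refine ⟨fun z => θ ‖z - x‖ - ξ (z - x), ?_, isMinOn_iff.2 fun y hy => ?_, ?_⟩
  · exact ((contDiff_one_comp_norm hθ hθ'0).comp (contDiff_id.sub contDiff_const)).sub
      (ξ.contDiff.comp (contDiff_id.sub contDiff_const))
  · rcases eq_or_ne y x with rfl | hyx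
    · rfl
    simp only [sub_self, norm_zero, hθ0, map_zero]
    linarith [hξρ y hy, hρθ _ (norm_pos_iff.2 (sub_ne_zero.2 hyx))]
  · rw [HasFDerivAt.fderiv (f := fun z => θ ‖z - x‖ - ξ (z - x))
      (hθx.sub (ξ.hasFDerivAt.comp x hshift))]
    simp

end SmoothVariational

/-- Proposition 3.10: if every C¹ objective having `x̄` as local minimizer makes
`x̄` extended M-stationary, then GGCQ holds at `x̄`. -/
theorem stmt10 {n m : ℕ}
    (F : Euc n → Euc m) (hF : ContDiff ℝ 1 F)
    (Ω : Set (Euc m)) (hΩ : IsFinUnionPolyhedra Ω)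
    (xb : Euc n) (hfeas : F xb ∈ Ω)
    (hyp : ∀ f : Euc n → ℝ, ContDiff ℝ 1 f →
      IsLocalMinOn f {x | F x ∈ Ω} xb →
      ∀ u : Euc n, fderiv ℝ F xb u ∈ tcone Ω (F xb) → fderiv ℝ f xb u ≤ 0 →
        ∃ μ : Euc m →L[ℝ] ℝ, μ ∈ dlnc Ω (F xb) (fderiv ℝ F xb u) ∧
          fderiv ℝ f xb + μ.comp (fderiv ℝ F xb) = 0) :
    fnc {x | F x ∈ Ω} xb = fnc {u : Euc n | fderiv ℝ F xb u ∈ tcone Ω (F xb)} 0 := by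
  have hA : HasFDerivAt F (fderiv ℝ F xb) xb := (hF.differentiable one_ne_zero xb).hasFDerivAt
  refine Subset.antisymm (fun ξ hξ => ?_) (fnc_zero_subset_fnc_preimage hA hfeas)
  have h0 : fderiv ℝ F xb 0 ∈ tcone Ω (F xb) := by simpa using zero_mem_tcone hfeas
  refine mem_fnc_zero_of_forall_nonpos h0 fun u hu => ?_
  obtain ⟨f, hf, hmin, hfξ⟩ := exists_contDiff_isMinOn_of_mem_fnc hξ
  by_contra! hξu
  obtain ⟨μ, hμ, hstat⟩ := hyp f hf hmin.localize u hu (by rw [hfξ]; simpa using hξu.le)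
  have hξμ : ξ u = μ (fderiv ℝ F xb u) := by
    simpa [hfξ, neg_add_eq_zero] using congrArg (· u) hstat
  linarith [apply_nonpos_of_mem_dlnc hΩ hμ]
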